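/- arXiv:1501.06949 — 3 statements merged into one kernel-verified Lean document; each statement's English description precedes it below -/
import Mathlib

section
/- Let δ>0 and let P_n, P : Ω₂×[0,H] → ℝ be continuous functions with ∂_{x₃}P_n ≤ −δ and ∂_{x₃}P ≤ −δ, such that P_n → P uniformly on Ω₂×[0,H]. For Q among {P_n, P} let h_Q^H(x₁,x₂) be the unique minimizer over [0,H] of s ↦ ∫₀ˢ[½(x₁²+x₂²) − Q(x₁,x₂,x₃)]dx₃. Then h_{P_n}^H → h_P^H uniformly on Ω₂, with the quantitative bound: if εₙ = sup|P_n − P|, then |h_{P_n}^H − h_P^H| ≤ εₙ/δ. -/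
open MeasureTheory

open MeasureTheory Set

lemma stmt1_key (δ H c : ℝ) (hδ : 0 < δ) (Q₁ Q₂ : ℝ → ℝ) (a b ε : ℝ)
    (hQ₁c : ContinuousOn Q₁ (Set.Icc 0 H)) (hQ₂c : ContinuousOn Q₂ (Set.Icc 0 H))
    (hs₁ : ∀ s t : ℝ, 0 ≤ s → s ≤ t → t ≤ H → Q₁ t - Q₁ s ≤ -δ * (t - s))
    (hs₂ : ∀ s t : ℝ, 0 ≤ s → s ≤ t → t ≤ H → Q₂ t - Q₂ s ≤ -δ * (t - s))
    (ha : a ∈ Set.Icc (0:ℝ) H) (hb : b ∈ Set.Icc (0:ℝ) H)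
    (hmin₁ : ∀ s ∈ Set.Icc (0:ℝ) H,
      (∫ t in (0:ℝ)..a, (c - Q₁ t)) ≤ ∫ t in (0:ℝ)..s, (c - Q₁ t))
    (hmin₂ : ∀ s ∈ Set.Icc (0:ℝ) H,
      (∫ t in (0:ℝ)..b, (c - Q₂ t)) ≤ ∫ t in (0:ℝ)..s, (c - Q₂ t))
    (hε : ∀ s ∈ Set.Icc (0:ℝ) H, |Q₁ s - Q₂ s| ≤ ε) :
    a - b ≤ ε / δ := by
  have h0H : (0:ℝ) ≤ H := le_trans ha.1 ha.2
  have hεnn : 0 ≤ ε := le_trans (abs_nonneg _) (hε 0 ⟨le_refl _, h0H⟩)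
  rcases le_or_gt a b with hab | hab
  · calc a - b ≤ 0 := by linarith
    _ ≤ ε / δ := by positivity
  -- integrability helper
  have hint : ∀ (Q : ℝ → ℝ), ContinuousOn Q (Set.Icc 0 H) → ∀ u v : ℝ,
      u ∈ Set.Icc (0:ℝ) H → v ∈ Set.Icc (0:ℝ) H →
      IntervalIntegrable (fun t => c - Q t) volume u v := by
    intro Q hQ u v hu hv
    apply ContinuousOn.intervalIntegrable
    apply (continuousOn_const.sub hQ).mono
    have hu' : u ∈ Set.uIcc 0 H := by rwa [Set.uIcc_of_le h0H]
    have hv' : v ∈ Set.uIcc 0 H := by rwa [Set.uIcc_of_le h0H]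
    rw [← Set.uIcc_of_le h0H]
    exact Set.uIcc_subset_uIcc hu' hv'
  have h0mem : (0:ℝ) ∈ Set.Icc (0:ℝ) H := ⟨le_refl _, h0H⟩
  -- step (i): integrand for Q₂ is nonneg just right of b
  have step1 : ∀ s : ℝ, b < s → s ≤ H → 0 ≤ c - Q₂ s := by
    intro s hbs hsH
    have hsmem : s ∈ Set.Icc (0:ℝ) H := ⟨le_trans hb.1 hbs.le, hsH⟩
    have hnn : 0 ≤ ∫ t in b..s, (c - Q₂ t) := by
      rw [← intervalIntegral.integral_interval_sub_left
        (hint Q₂ hQ₂c 0 s h0mem hsmem) (hint Q₂ hQ₂c 0 b h0mem hb)]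
      have := hmin₂ s hsmem
      linarith
    have hub : (∫ t in b..s, (c - Q₂ t)) ≤ (s - b) * (c - Q₂ s) := by
      have : (∫ t in b..s, (c - Q₂ t)) ≤ ∫ _t in b..s, (c - Q₂ s) := by
        apply intervalIntegral.integral_mono_on hbs.le
          (hint Q₂ hQ₂c b s hb hsmem)
          (intervalIntegrable_const)
        intro t ht
        have h1 : Q₂ s - Q₂ t ≤ -δ * (s - t) :=
          hs₂ t s (le_trans hb.1 ht.1) ht.2 hsH
        nlinarith [ht.2, ht.1]
      rw [intervalIntegral.integral_const, smul_eq_mul] at this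
      linarith
    nlinarith
  -- step (ii): integrand for Q₁ is nonpos just left of a
  have step2 : ∀ s : ℝ, 0 ≤ s → s < a → c - Q₁ s ≤ 0 := by
    intro s hs0 hsa
    have hsmem : s ∈ Set.Icc (0:ℝ) H := ⟨hs0, le_trans hsa.le ha.2⟩
    have hnp : (∫ t in s..a, (c - Q₁ t)) ≤ 0 := by
      rw [← intervalIntegral.integral_interval_sub_left
        (hint Q₁ hQ₁c 0 a h0mem ha) (hint Q₁ hQ₁c 0 s h0mem hsmem)]
      have := hmin₁ s hsmem
      linarith
    have hlb : (a - s) * (c - Q₁ s) ≤ ∫ t in s..a, (c - Q₁ t) := by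
      have : (∫ _t in s..a, (c - Q₁ s)) ≤ ∫ t in s..a, (c - Q₁ t) := by
        apply intervalIntegral.integral_mono_on hsa.le
          (intervalIntegrable_const)
          (hint Q₁ hQ₁c s a hsmem ha)
        intro t ht
        have h1 : Q₁ t - Q₁ s ≤ -δ * (t - s) := hs₁ s t hs0 ht.1 (le_trans ht.2 ha.2)
        nlinarith [ht.1]
      rw [intervalIntegral.integral_const, smul_eq_mul] at this
      linarith
    nlinarith
  -- main bound
  have hδL : δ * (a - b) ≤ ε := by
    apply le_of_forall_pos_le_add
    intro c' hc'
    set η := min ((a - b) / 4) (c' / (2 * δ)) with hηdef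
    have hη : 0 < η := lt_min (by linarith) (by positivity)
    have hη4 : η ≤ (a - b) / 4 := min_le_left _ _
    have hηc : η ≤ c' / (2 * δ) := min_le_right _ _
    set m := (a + b) / 2 with hmdef
    have hbm : b < m := by simp only [hmdef]; linarith
    have hma : m < a := by simp only [hmdef]; linarith
    have hmH : m ≤ H := le_trans hma.le ha.2
    have hm0 : 0 ≤ m := le_trans hb.1 hbm.le
    -- lower bound on c - Q₂ m is not needed; use values at b+η and a-η
    have hg2 : 0 ≤ c - Q₂ (b + η) := step1 (b + η) (by linarith) (by linarith)
    have hg1 : c - Q₁ (a - η) ≤ 0 := step2 (a - η) (by linarith [hb.1]) (by linarith)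
    have hsl2 : Q₂ m - Q₂ (b + η) ≤ -δ * (m - (b + η)) :=
      hs₂ (b + η) m (by linarith [hb.1]) (by linarith) hmH
    have hsl1 : Q₁ (a - η) - Q₁ m ≤ -δ * ((a - η) - m) :=
      hs₁ m (a - η) hm0 (by linarith) (by linarith [ha.2])
    have hεm : Q₁ m - Q₂ m ≤ ε := (abs_le.mp (hε m ⟨hm0, hmH⟩)).2
    have hδη : δ * η ≤ c' / 2 := by
      have e : δ * (c' / (2 * δ)) = c' / 2 := by
        field_simp
      nlinarith
    nlinarith
  rw [le_div_iff₀ hδ]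
  linarith [hδL]


/-- Uniform convergence of free-boundary profiles: if `Pₙ → P` uniformly on `Ω₂ × [0,H]`,
all with third-variable slope at most `−δ`, and `hₙ`, `h` are the minimizers over `[0,H]` of
`s ↦ ∫₀ˢ[½(x₁²+x₂²) − Q(x₁,x₂,x₃)]dx₃` for `Q = Pₙ, P` respectively, then `hₙ → h`
uniformly on `Ω₂`, with the quantitative bound `|hₙ − h| ≤ εₙ/δ` where
`εₙ = sup |Pₙ − P|`. -/
theorem stmt1 (δ H : ℝ) (hδ : 0 < δ) (hH : 0 < H) (Ω₂ : Set (ℝ × ℝ))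
    (Pn : ℕ → ℝ × ℝ → ℝ → ℝ) (P : ℝ × ℝ → ℝ → ℝ)
    (hPncont : ∀ n x, ContinuousOn (Pn n x) (Set.Icc 0 H))
    (hPcont : ∀ x, ContinuousOn (P x) (Set.Icc 0 H))
    (hPnslope : ∀ n x, ∀ s t : ℝ, 0 ≤ s → s ≤ t → t ≤ H →
        Pn n x t - Pn n x s ≤ -δ * (t - s))
    (hPslope : ∀ x, ∀ s t : ℝ, 0 ≤ s → s ≤ t → t ≤ H →
        P x t - P x s ≤ -δ * (t - s))
    (hunif : TendstoUniformlyOn (fun n p => Pn n p.1 p.2) (fun p => P p.1 p.2)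
        Filter.atTop (Ω₂ ×ˢ Set.Icc 0 H))
    (hn : ℕ → ℝ × ℝ → ℝ) (h : ℝ × ℝ → ℝ)
    (hhn : ∀ n, ∀ x ∈ Ω₂, hn n x ∈ Set.Icc (0:ℝ) H ∧
        ∀ s ∈ Set.Icc (0:ℝ) H,
          (∫ t in (0:ℝ)..(hn n x), ((x.1 ^ 2 + x.2 ^ 2) / 2 - Pn n x t)) ≤
            ∫ t in (0:ℝ)..s, ((x.1 ^ 2 + x.2 ^ 2) / 2 - Pn n x t))
    (hh : ∀ x ∈ Ω₂, h x ∈ Set.Icc (0:ℝ) H ∧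
        ∀ s ∈ Set.Icc (0:ℝ) H,
          (∫ t in (0:ℝ)..(h x), ((x.1 ^ 2 + x.2 ^ 2) / 2 - P x t)) ≤
            ∫ t in (0:ℝ)..s, ((x.1 ^ 2 + x.2 ^ 2) / 2 - P x t)) :
    TendstoUniformlyOn hn h Filter.atTop Ω₂ ∧
    ∀ (n : ℕ) (ε : ℝ),
      (∀ x ∈ Ω₂, ∀ s ∈ Set.Icc (0:ℝ) H, |Pn n x s - P x s| ≤ ε) →
      ∀ x ∈ Ω₂, |hn n x - h x| ≤ ε / δ := by
  have part2 : ∀ (n : ℕ) (ε : ℝ),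
      (∀ x ∈ Ω₂, ∀ s ∈ Set.Icc (0:ℝ) H, |Pn n x s - P x s| ≤ ε) →
      ∀ x ∈ Ω₂, |hn n x - h x| ≤ ε / δ := by
    intro n ε hε x hx
    obtain ⟨hamem, hamin⟩ := hhn n x hx
    obtain ⟨hbmem, hbmin⟩ := hh x hx
    have h1 : hn n x - h x ≤ ε / δ :=
      stmt1_key δ H ((x.1 ^ 2 + x.2 ^ 2) / 2) hδ (Pn n x) (P x) (hn n x) (h x) ε
        (hPncont n x) (hPcont x) (hPnslope n x) (hPslope x) hamem hbmem hamin hbmin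
        (hε x hx)
    have h2 : h x - hn n x ≤ ε / δ :=
      stmt1_key δ H ((x.1 ^ 2 + x.2 ^ 2) / 2) hδ (P x) (Pn n x) (h x) (hn n x) ε
        (hPcont x) (hPncont n x) (hPslope x) (hPnslope n x) hbmem hamem hbmin hamin
        (fun s hs => by rw [abs_sub_comm]; exact hε x hx s hs)
    rw [abs_le]
    constructor <;> linarith
  refine ⟨?_, part2⟩
  rw [Metric.tendstoUniformlyOn_iff]
  intro ε' hε'
  have hkey := (Metric.tendstoUniformlyOn_iff.mp hunif) (δ * ε' / 2) (by positivity)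
  filter_upwards [hkey] with n hn' x hx
  have hb : ∀ y ∈ Ω₂, ∀ s ∈ Set.Icc (0:ℝ) H, |Pn n y s - P y s| ≤ δ * ε' / 2 := by
    intro y hy s hs
    have := hn' (y, s) ⟨hy, hs⟩
    rw [Real.dist_eq, abs_sub_comm] at this
    exact this.le
  have := part2 n (δ * ε' / 2) hb x hx
  have heq : δ * ε' / 2 / δ = ε' / 2 := by field_simp
  rw [Real.dist_eq, abs_sub_comm]
  rw [heq] at this
  linarith
end

section
/- Let P : Ω₂×[0,H] → ℝ be Lipschitz with |∇₂P| ≤ C (gradient in the first two variables) and ∂_{x₃}P ≤ −δ. Define h = h_P^H as the unique minimizer over [0,H] of s ↦ ∫₀ˢ[½(x₁²+x₂²) − P(x₁,x₂,x₃)]dx₃. Then h is Lipschitz on Ω₂ with Lipschitz constant at most (C + sup_{Ω₂}(|x₁|+|x₂|))/δ. -/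
open MeasureTheory

lemma aux_left (H : ℝ) (g : ℝ → ℝ) (hg : ContinuousOn g (Set.Icc 0 H))
    (b : ℝ) (hb : b ∈ Set.Icc (0:ℝ) H) (hb0 : 0 < b)
    (hmin : ∀ s ∈ Set.Icc (0:ℝ) H, (∫ t in (0:ℝ)..b, g t) ≤ ∫ t in (0:ℝ)..s, g t) :
    g b ≤ 0 := by
  by_contra hpos
  push_neg at hpos
  have hcw : ContinuousWithinAt g (Set.Icc 0 H) b := hg b hb
  have hev : ∀ᶠ t in nhdsWithin b (Set.Icc 0 H), g b / 2 < g t :=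
    hcw.eventually (eventually_gt_nhds (by linarith))
  obtain ⟨ε, hε, hball⟩ := Metric.mem_nhdsWithin_iff.mp hev
  set s := max 0 (b - ε/2) with hs
  have hs0 : (0:ℝ) ≤ s := le_max_left _ _
  have hsb : s < b := max_lt hb0 (by linarith)
  have hsH : s ∈ Set.Icc (0:ℝ) H := ⟨hs0, le_trans hsb.le hb.2⟩
  have hpt : ∀ t ∈ Set.Icc s b, g b / 2 ≤ g t := by
    intro t ht
    have h1 : b - ε/2 ≤ s := le_max_right _ _
    refine le_of_lt (hball ⟨Metric.mem_ball.mpr ?_, le_trans hs0 ht.1, le_trans ht.2 hb.2⟩)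
    rw [Real.dist_eq, abs_lt]
    constructor <;> nlinarith [ht.1, ht.2]
  have hint1 : IntervalIntegrable g volume 0 s := by
    apply (hg.mono ?_).intervalIntegrable
    rw [Set.uIcc_of_le hs0]
    exact Set.Icc_subset_Icc le_rfl hsH.2
  have hint2 : IntervalIntegrable g volume s b := by
    apply (hg.mono ?_).intervalIntegrable
    rw [Set.uIcc_of_le hsb.le]
    exact Set.Icc_subset_Icc hs0 hb.2
  have hlow : (b - s) * (g b / 2) ≤ ∫ t in s..b, g t := by
    have := intervalIntegral.integral_mono_on hsb.le intervalIntegrable_const hint2 hpt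
    simpa [smul_eq_mul, mul_div_assoc] using this
  have hadd : (∫ t in (0:ℝ)..s, g t) + ∫ t in s..b, g t = ∫ t in (0:ℝ)..b, g t :=
    intervalIntegral.integral_add_adjacent_intervals hint1 hint2
  have hmins := hmin s hsH
  have hp : 0 < (b - s) * (g b / 2) := mul_pos (by linarith) (by linarith)
  linarith

lemma aux_right (H : ℝ) (g : ℝ → ℝ) (hg : ContinuousOn g (Set.Icc 0 H))
    (a : ℝ) (ha : a ∈ Set.Icc (0:ℝ) H) (haH : a < H)
    (hmin : ∀ s ∈ Set.Icc (0:ℝ) H, (∫ t in (0:ℝ)..a, g t) ≤ ∫ t in (0:ℝ)..s, g t) :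
    0 ≤ g a := by
  by_contra hneg
  push_neg at hneg
  have hcw : ContinuousWithinAt g (Set.Icc 0 H) a := hg a ha
  have hev : ∀ᶠ t in nhdsWithin a (Set.Icc 0 H), g t < g a / 2 :=
    hcw.eventually (eventually_lt_nhds (by linarith))
  obtain ⟨ε, hε, hball⟩ := Metric.mem_nhdsWithin_iff.mp hev
  set s := min H (a + ε/2) with hs
  have hsH : s ≤ H := min_le_left _ _
  have has : a < s := lt_min haH (by linarith)
  have hs0 : (0:ℝ) ≤ s := le_trans ha.1 has.le
  have hsI : s ∈ Set.Icc (0:ℝ) H := ⟨hs0, hsH⟩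
  have hpt : ∀ t ∈ Set.Icc a s, g t ≤ g a / 2 := by
    intro t ht
    have h1 : s ≤ a + ε/2 := min_le_right _ _
    refine le_of_lt (hball ⟨Metric.mem_ball.mpr ?_, le_trans ha.1 ht.1, le_trans ht.2 hsH⟩)
    rw [Real.dist_eq, abs_lt]
    constructor <;> nlinarith [ht.1, ht.2]
  have hint1 : IntervalIntegrable g volume 0 a := by
    apply (hg.mono ?_).intervalIntegrable
    rw [Set.uIcc_of_le ha.1]
    exact Set.Icc_subset_Icc le_rfl ha.2
  have hint2 : IntervalIntegrable g volume a s := by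
    apply (hg.mono ?_).intervalIntegrable
    rw [Set.uIcc_of_le has.le]
    exact Set.Icc_subset_Icc ha.1 hsH
  have hupp : (∫ t in a..s, g t) ≤ (s - a) * (g a / 2) := by
    have := intervalIntegral.integral_mono_on has.le hint2 intervalIntegrable_const hpt
    simpa [smul_eq_mul, mul_div_assoc] using this
  have hadd : (∫ t in (0:ℝ)..a, g t) + ∫ t in a..s, g t = ∫ t in (0:ℝ)..s, g t :=
    intervalIntegral.integral_add_adjacent_intervals hint1 hint2
  have hmins := hmin s hsI
  have hp : (s - a) * (g a / 2) < 0 := mul_neg_of_pos_of_neg (by linarith) (by linarith)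
  linarith

/-- If `P : Ω₂×[0,H] → ℝ` is Lipschitz in the horizontal variables with constant `C`
(Euclidean distance) and has third-variable slope at most `−δ`, then the free boundary
profile `h = h_P^H` (the minimizer over `[0,H]` of `s ↦ ∫₀ˢ[½|x|² − P(x,x₃)]dx₃`)
is Lipschitz on `Ω₂` with constant `(C + sup_{Ω₂}(|x₁|+|x₂|))/δ`. -/
theorem stmt2 (δ H C M : ℝ) (hδ : 0 < δ) (hH : 0 < H) (hC : 0 < C)
    (Ω₂ : Set (EuclideanSpace ℝ (Fin 2)))
    (hΩbdd : Bornology.IsBounded Ω₂) (hΩconv : Convex ℝ Ω₂)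
    (hM : ∀ x ∈ Ω₂, |x 0| + |x 1| ≤ M)
    (P : EuclideanSpace ℝ (Fin 2) → ℝ → ℝ)
    (hPcont : ∀ x, ContinuousOn (P x) (Set.Icc 0 H))
    (hLip2 : ∀ x ∈ Ω₂, ∀ z ∈ Ω₂, ∀ s ∈ Set.Icc (0:ℝ) H,
        |P x s - P z s| ≤ C * dist x z)
    (hslope : ∀ x ∈ Ω₂, ∀ s t : ℝ, 0 ≤ s → s ≤ t → t ≤ H →
        P x t - P x s ≤ -δ * (t - s))
    (h : EuclideanSpace ℝ (Fin 2) → ℝ)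
    (hmin : ∀ x ∈ Ω₂, h x ∈ Set.Icc (0:ℝ) H ∧
        ∀ s ∈ Set.Icc (0:ℝ) H,
          (∫ t in (0:ℝ)..(h x), (((x 0) ^ 2 + (x 1) ^ 2) / 2 - P x t)) ≤
            ∫ t in (0:ℝ)..s, (((x 0) ^ 2 + (x 1) ^ 2) / 2 - P x t)) :
    ∀ x ∈ Ω₂, ∀ z ∈ Ω₂, |h x - h z| ≤ (C + M) / δ * dist x z := by
  have key : ∀ x ∈ Ω₂, ∀ z ∈ Ω₂, h x - h z ≤ (C + M) / δ * dist x z := by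
    intro x hx z hz
    obtain ⟨hbI, hbmin⟩ := hmin x hx
    obtain ⟨haI, hamin⟩ := hmin z hz
    have hM0 : 0 ≤ M := le_trans (by positivity) (hM x hx)
    by_cases hab : h x ≤ h z
    · have : 0 ≤ (C + M) / δ * dist x z :=
        mul_nonneg (div_nonneg (by linarith) hδ.le) dist_nonneg
      linarith
    push_neg at hab
    -- a := h z < b := h x
    have hgxcont : ContinuousOn (fun t => ((x 0) ^ 2 + (x 1) ^ 2) / 2 - P x t) (Set.Icc 0 H) :=
      continuousOn_const.sub (hPcont x)
    have hgzcont : ContinuousOn (fun t => ((z 0) ^ 2 + (z 1) ^ 2) / 2 - P z t) (Set.Icc 0 H) :=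
      continuousOn_const.sub (hPcont z)
    have hb0 : 0 < h x := lt_of_le_of_lt haI.1 hab
    have haH : h z < H := lt_of_lt_of_le hab hbI.2
    have hgb : ((x 0) ^ 2 + (x 1) ^ 2) / 2 - P x (h x) ≤ 0 :=
      aux_left H _ hgxcont (h x) hbI hb0 hbmin
    have hga : 0 ≤ ((z 0) ^ 2 + (z 1) ^ 2) / 2 - P z (h z) :=
      aux_right H _ hgzcont (h z) haI haH hamin
    have hsl : P x (h x) - P x (h z) ≤ -δ * (h x - h z) :=
      hslope x hx (h z) (h x) haI.1 hab.le hbI.2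
    have hlip : |P x (h z) - P z (h z)| ≤ C * dist x z := hLip2 x hx z hz (h z) haI
    -- coordinate bound
    have hcoord : ∀ i : Fin 2, |x i - z i| ≤ dist x z := by
      intro i
      rw [EuclideanSpace.dist_eq]
      have h1 : |x i - z i| ^ 2 ≤ ∑ j, dist (x j) (z j) ^ 2 := by
        have := Finset.single_le_sum (f := fun j => dist (x j) (z j) ^ 2)
          (fun j _ => sq_nonneg _) (Finset.mem_univ i)
        simpa [Real.dist_eq] using this
      calc |x i - z i| = Real.sqrt (|x i - z i| ^ 2) := (Real.sqrt_sq (abs_nonneg _)).symm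
        _ ≤ _ := Real.sqrt_le_sqrt h1
    have hq : |((x 0) ^ 2 + (x 1) ^ 2) / 2 - ((z 0) ^ 2 + (z 1) ^ 2) / 2| ≤ M * dist x z := by
      have e0 : |x 0 ^ 2 - z 0 ^ 2| ≤ (|x 0| + |z 0|) * dist x z := by
        have he : x 0 ^ 2 - z 0 ^ 2 = (x 0 + z 0) * (x 0 - z 0) := by ring
        rw [he, abs_mul]
        exact mul_le_mul (abs_add_le _ _) (hcoord 0) (abs_nonneg _)
          (by positivity)
      have e1 : |x 1 ^ 2 - z 1 ^ 2| ≤ (|x 1| + |z 1|) * dist x z := by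
        have he : x 1 ^ 2 - z 1 ^ 2 = (x 1 + z 1) * (x 1 - z 1) := by ring
        rw [he, abs_mul]
        exact mul_le_mul (abs_add_le _ _) (hcoord 1) (abs_nonneg _)
          (by positivity)
      have hsum : (|x 0| + |z 0|) + (|x 1| + |z 1|) ≤ 2 * M := by
        have h1 := hM x hx; have h2 := hM z hz; linarith
      have hsum2 : ((|x 0| + |z 0|) + (|x 1| + |z 1|)) * dist x z ≤ 2 * M * dist x z :=
        mul_le_mul_of_nonneg_right hsum dist_nonneg
      have := abs_le.mp e0
      have := abs_le.mp e1
      rw [abs_le]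
      constructor <;> nlinarith
    have hqa := abs_le.mp hq
    have hla := abs_le.mp hlip
    -- δ * (h x - h z) ≤ (C + M) * dist x z
    have hfin : δ * (h x - h z) ≤ (C + M) * dist x z := by nlinarith
    rw [div_mul_eq_mul_div, le_div_iff₀ hδ]
    nlinarith
  intro x hx z hz
  have h1 := key x hx z hz
  have h2 := key z hz x hx
  rw [dist_comm] at h2
  rw [abs_sub_le_iff]
  exact ⟨h1, h2⟩
end

section
/- Let P : ℝⁿ ⊇ Ω → ℝ be convex on a convex open set Ω, R(y) = sup_{x∈Ω}(x·y − P(x)), and suppose ν = (∇P)_♯μ for a measure μ ≪ 𝓛ⁿ concentrated on the differentiability points of P, with ν ≪ 𝓛ⁿ. Then ∇R(∇P(x)) = x for μ-a.e. x, and consequently (∇R)_♯ν = μ. -/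
/-! At a point `x` where `P` is differentiable, the tangent-plane inequality of the convex `P`
shows that `x` attains the supremum defining `R (∇P x)`, and the supremum over the other `y`
then makes `x` a subgradient of `R` at `∇P x`. Where `R` is differentiable its gradient is its
only subgradient, so `∇R (∇P x) = x`; pushing `ν = (∇P)_♯μ` forward by `∇R` gives `μ`. -/

open MeasureTheory RealInnerProductSpace

section

variable {E : Type*} [NormedAddCommGroup E] [InnerProductSpace ℝ E] [CompleteSpace E]

theorem ConvexOn.inner_sub_le_of_hasGradientAt {s : Set E} {f : E → ℝ} {g x y : E}
    (hf : ConvexOn ℝ s f) (hx : x ∈ s) (hy : y ∈ s) (hg : HasGradientAt f g x) :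
    ⟪g, y - x⟫ ≤ f y - f x := by
  have hline : HasDerivAt (f ∘ AffineMap.lineMap x y) ⟪g, y - x⟫ (0 : ℝ) := by
    rw [← AffineMap.lineMap_apply_zero x y (k := ℝ)] at hg
    simpa using hg.hasFDerivAt.comp_hasDerivAt (0 : ℝ) AffineMap.hasDerivAt_lineMap
  have := (hf.comp_affineMap (AffineMap.lineMap x y)).le_slope_of_hasDerivAt
    (by simpa using hx) (by simpa using hy) zero_lt_one hline
  simpa [slope] using this

theorem HasGradientAt.eq_of_forall_add_inner_sub_le {f : E → ℝ} {g x y : E}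
    (hg : HasGradientAt f g y) (hsub : ∀ z, f y + ⟪x, z - y⟫ ≤ f z) : g = x := by
  have hmin : IsLocalMin (fun z => f z - ⟪x, z⟫) y := Filter.Eventually.of_forall fun z => by
    have := hsub z
    rw [inner_sub_right] at this
    show f y - ⟪x, y⟫ ≤ f z - ⟪x, z⟫
    linarith
  have hderiv : HasFDerivAt (fun z => f z - ⟪x, z⟫) (InnerProductSpace.toDual ℝ E (g - x)) y := by
    rw [map_sub]
    exact hg.hasFDerivAt.sub (InnerProductSpace.toDual ℝ E x).hasFDerivAt
  simpa [sub_eq_zero] using hmin.hasFDerivAt_eq_zero hderiv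

theorem ConvexOn.conjugate_add_inner_sub_le {s : Set E} {P R : E → ℝ} {g x : E}
    (hP : ConvexOn ℝ s P) (hR : ∀ y, IsLUB ((fun x => ⟪x, y⟫ - P x) '' s) (R y))
    (hx : x ∈ s) (hg : HasGradientAt P g x) (y : E) :
    R g + ⟪x, y - g⟫ ≤ R y := by
  have hRg : R g ≤ ⟪x, g⟫ - P x := (hR g).2 <| by
    rintro _ ⟨z, hz, rfl⟩
    have := hP.inner_sub_le_of_hasGradientAt hx hz hg
    rw [inner_sub_right] at this
    dsimp only
    rw [real_inner_comm g z, real_inner_comm g x]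
    linarith
  have hRy : ⟪x, y⟫ - P x ≤ R y := (hR y).1 ⟨x, hx, rfl⟩
  rw [inner_sub_right]
  linarith

theorem ConvexOn.conjugate_gradient_eq {s : Set E} {P R : E → ℝ} {g h x : E}
    (hP : ConvexOn ℝ s P) (hR : ∀ y, IsLUB ((fun x => ⟪x, y⟫ - P x) '' s) (R y))
    (hx : x ∈ s) (hg : HasGradientAt P g x) (hh : HasGradientAt R h g) : h = x :=
  hh.eq_of_forall_add_inner_sub_le (hP.conjugate_add_inner_sub_le hR hx hg)

end

theorem stmt18_general {n : ℕ} (Ω : Set (EuclideanSpace ℝ (Fin n)))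
    (P R : EuclideanSpace ℝ (Fin n) → ℝ)
    (hP : ConvexOn ℝ Ω P)
    (hR : ∀ y : EuclideanSpace ℝ (Fin n),
        IsLUB ((fun x => ⟪x, y⟫ - P x) '' Ω) (R y))
    (μ ν : Measure (EuclideanSpace ℝ (Fin n)))
    (DP DR : EuclideanSpace ℝ (Fin n) → EuclideanSpace ℝ (Fin n))
    (hDPm : Measurable DP) (hDRm : Measurable DR)
    (hDP : ∀ᵐ x ∂μ, x ∈ Ω ∧ HasGradientAt P (DP x) x)
    (hν : ν = μ.map DP)
    (hDR : ∀ᵐ y ∂ν, HasGradientAt R (DR y) y) :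
    (∀ᵐ x ∂μ, DR (DP x) = x) ∧ ν.map DR = μ := by
  subst hν
  have hinv : ∀ᵐ x ∂μ, DR (DP x) = x := by
    filter_upwards [hDP, ae_of_ae_map hDPm.aemeasurable hDR] with x ⟨hxΩ, hPx⟩ hRx
    exact hP.conjugate_gradient_eq hR hxΩ hPx hRx
  refine ⟨hinv, ?_⟩
  rw [Measure.map_map hDRm hDPm]
  exact (Measure.map_congr (g := id) hinv).trans Measure.map_id

/-- Theorem 2.18(iii): if `R` is the convex conjugate of the convex function `P` over
the open convex set `Ω`, `ν = (∇P)_♯μ` with `μ` concentrated on `Ω`, `μ ≪ 𝓛ⁿ`,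
`ν ≪ 𝓛ⁿ`, then `∇R(∇P(x)) = x` for `μ`-a.e. `x`, and consequently `(∇R)_♯ν = μ`. -/
theorem stmt18 {n : ℕ} (Ω : Set (EuclideanSpace ℝ (Fin n)))
    (hΩo : IsOpen Ω) (hΩc : Convex ℝ Ω)
    (P R : EuclideanSpace ℝ (Fin n) → ℝ)
    (hP : ConvexOn ℝ Ω P)
    (hR : ∀ y : EuclideanSpace ℝ (Fin n),
        IsLUB ((fun x => ⟪x, y⟫ - P x) '' Ω) (R y))
    (μ ν : Measure (EuclideanSpace ℝ (Fin n))) [IsFiniteMeasure μ]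
    (hμΩ : μ Ωᶜ = 0) (hμac : μ ≪ volume) (hνac : ν ≪ volume)
    (DP DR : EuclideanSpace ℝ (Fin n) → EuclideanSpace ℝ (Fin n))
    (hDPm : Measurable DP) (hDRm : Measurable DR)
    (hDP : ∀ᵐ x ∂μ, x ∈ Ω ∧ HasGradientAt P (DP x) x)
    (hν : ν = μ.map DP)
    (hDR : ∀ᵐ y ∂ν, HasGradientAt R (DR y) y) :
    (∀ᵐ x ∂μ, DR (DP x) = x) ∧ ν.map DR = μ :=
  stmt18_general Ω P R hP hR μ ν DP DR hDPm hDRm hDP hν hDR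
end
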